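/- arXiv:2209.10289 — 2 statements merged into one kernel-verified Lean document; each statement's English description precedes it below -/
import Mathlib

section
/- Let K be a field of characteristic zero, V a finite-dimensional K-vector space, and φ : V → V a K-linear endomorphism whose characteristic polynomial is the image in K[T] of a polynomial χ ∈ ℚ[T] all of whose complex roots have absolute value q^{a/2}, where q is a power of a prime and a ∈ ℤ. Let P ∈ Poly_b with b ∈ ℤ and b ≠ a. Then P(φ) : V → V is a linear automorphism of V. (This weight-separation invertibility is the purity argument used in the proof of the short exact sequence for finite polynomial cohomology, Corollary 'short exact sequence of fp coh'.) -/
/-!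
Since `q > 1`, the weights `q^(b/2) ≠ q^(a/2)` differ, so `P` and `χ` have no common complex
root and are therefore coprime. A Bézout relation `u P + v χ = 1`, evaluated at `φ` and
combined with Cayley–Hamilton `χ(φ) = 0`, exhibits `u(φ)` as the inverse of `P(φ)`.
-/

open Polynomial

theorem Polynomial.isCoprime_of_forall_norm_root_eq {k : Type*} [Field k] [Algebra k ℂ]
    {p q : k[X]} {r s : ℝ} (hrs : r ≠ s)
    (hp : ∀ z : ℂ, (p.map (algebraMap k ℂ)).IsRoot z → ‖z‖ = r)
    (hq : ∀ z : ℂ, (q.map (algebraMap k ℂ)).IsRoot z → ‖z‖ = s) :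
    IsCoprime p q := by
  refine (isCoprime_iff_aeval_ne_zero_of_isAlgClosed k ℂ p q).mpr fun z => ?_
  by_contra! hroot
  have hpz : (p.map (algebraMap k ℂ)).IsRoot z := by
    simpa [IsRoot, eval_map_algebraMap] using hroot.1
  have hqz : (q.map (algebraMap k ℂ)).IsRoot z := by
    simpa [IsRoot, eval_map_algebraMap] using hroot.2
  exact hrs ((hp z hpz).symm.trans (hq z hqz))

theorem IsCoprime.isUnit_aeval_of_aeval_eq_zero {R A : Type*} [CommRing R] [Ring A]
    [Algebra R A] {p q : R[X]} (hpq : IsCoprime p q) {x : A} (hq : aeval x q = 0) :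
    IsUnit (aeval x p) := by
  obtain ⟨u, v, huv⟩ := hpq
  have hleft : aeval x u * aeval x p = 1 := by
    simpa [hq] using congrArg (aeval x) huv
  have hright : aeval x p * aeval x u = 1 := by
    rw [← map_mul, mul_comm, map_mul, hleft]
  exact ⟨⟨_, _, hright, hleft⟩, rfl⟩

theorem stmt_2_general (K : Type*) [Field K] [CharZero K]
    (V : Type*) [AddCommGroup V] [Module K V] [FiniteDimensional K V]
    (φ : V →ₗ[K] V)
    (q : ℕ) (hq : ∃ p k : ℕ, p.Prime ∧ 0 < k ∧ q = p ^ k)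
    (a b : ℤ) (hab : b ≠ a)
    (χ : Polynomial ℚ) (hχ : LinearMap.charpoly φ = χ.map (algebraMap ℚ K))
    (hχroots : ∀ z : ℂ, (χ.map (algebraMap ℚ ℂ)).IsRoot z →
      ‖z‖ = (q : ℝ) ^ ((a : ℝ) / 2))
    (P : Polynomial ℚ)
    (hProots : ∀ z : ℂ, (P.map (algebraMap ℚ ℂ)).IsRoot z →
      ‖z‖ = (q : ℝ) ^ ((b : ℝ) / 2)) :
    Function.Bijective (Polynomial.aeval φ (P.map (algebraMap ℚ K)) : V →ₗ[K] V) := by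
  obtain ⟨p, k, hp, hk, rfl⟩ := hq
  have hq1 : (1 : ℝ) < (p ^ k : ℕ) := by exact_mod_cast Nat.one_lt_pow hk.ne' hp.one_lt
  have hweights :
      ((p ^ k : ℕ) : ℝ) ^ ((b : ℝ) / 2) ≠ ((p ^ k : ℕ) : ℝ) ^ ((a : ℝ) / 2) := by
    rw [Ne, Real.rpow_right_inj (by linarith) hq1.ne']
    intro h
    exact hab (by exact_mod_cast (div_left_inj' two_ne_zero).mp h)
  have hcop : IsCoprime P χ := isCoprime_of_forall_norm_root_eq hweights hProots hχroots
  have hcayley : aeval φ (χ.map (algebraMap ℚ K)) = 0 :=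
    hχ ▸ LinearMap.aeval_self_charpoly φ
  exact (Module.End.isUnit_iff _).mp
    ((hcop.map (mapRingHom (algebraMap ℚ K))).isUnit_aeval_of_aeval_eq_zero hcayley)

/-- Weight-separation invertibility: if the characteristic polynomial of `φ` comes
from a rational polynomial `χ` all of whose complex roots have absolute value
`q^(a/2)`, and `P ∈ Poly_b` (constant coefficient `1`, all complex roots of
absolute value `q^(b/2)`) with `b ≠ a`, then `P(φ)` is a linear automorphism. -/
theorem stmt_2 (K : Type*) [Field K] [CharZero K]
    (V : Type*) [AddCommGroup V] [Module K V] [FiniteDimensional K V]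
    (φ : V →ₗ[K] V)
    (q : ℕ) (hq : ∃ p k : ℕ, p.Prime ∧ 0 < k ∧ q = p ^ k)
    (a b : ℤ) (hab : b ≠ a)
    (χ : Polynomial ℚ) (hχ : LinearMap.charpoly φ = χ.map (algebraMap ℚ K))
    (hχroots : ∀ z : ℂ, (χ.map (algebraMap ℚ ℂ)).IsRoot z →
      ‖z‖ = (q : ℝ) ^ ((a : ℝ) / 2))
    (P : Polynomial ℚ) (hP0 : P.coeff 0 = 1)
    (hProots : ∀ z : ℂ, (P.map (algebraMap ℚ ℂ)).IsRoot z →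
      ‖z‖ = (q : ℝ) ^ ((b : ℝ) / 2)) :
    Function.Bijective (Polynomial.aeval φ (P.map (algebraMap ℚ K)) : V →ₗ[K] V) :=
  stmt_2_general K V φ q hq a b hab χ hχ hχroots P hProots
end

section
/- Let K be a field, let A• and B• be cochain complexes of K-vector spaces, let ψ : A• → B• be a quasi-isomorphism, let e : A• → A• be a morphism of complexes, and let F• ⊆ B• be a subcomplex such that the natural map H^i(B•) → H^i(B•/F•) is surjective for every i. Set F H^i(B) := ker(H^i(B•) → H^i(B•/F•)), and let ē denote the endomorphism of H^i(B•) obtained by transporting H^i(e) along the isomorphism H^i(ψ). Let T• be the mapping fibre of the morphism of complexes A• → A• ⊕ (B•/F•) whose components are e and the composite of ψ with the projection B• → B•/F•. Then for every i there is a short exact sequence of K-vector spaces 0 → H^{i−1}(B•)/ē(F H^{i−1}(B•)) → H^i(T•) → {a ∈ H^i(A•) : H^i(e)(a) = 0 and H^i(ψ)(a) ∈ F H^i(B•)} → 0, in which the surjection is induced by the projection of T• onto A•. (This is the abstract form of the fundamental exact sequence 0 → H_{dR}^{i−1}/P(Φ^e)(F^n H_{dR}^{i−1}) → H_{syn,P}^i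 → H_{HK}^{i,P(Φ^e)=0} ∩ F^n H_{dR}^i → 0 of Corollary 'exact sequence when X is of good reduction'.) -/
/-!
The fibre triangle `T → A → A ⊞ B/F → T⟦1⟧` of `synF = (e, π ∘ ψ)` gives the exact sequence
`H^{i-1}(A) → H^{i-1}(A ⊞ B/F) → H^i(T) → H^i(A) → H^i(A ⊞ B/F)`, and homology commutes with
biproducts, so the kernel of the last map is `{a | e a = 0, π (ψ a) = 0}`. The cokernel of the
first map is `H^{i-1}(B) / ē(F H^{i-1}(B))` via `b ↦ (ψ⁻¹ b, 0)`: this map hits every class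
because `H(π)` is surjective, and `(ψ⁻¹ b, 0) = (e a, π (ψ a))` exactly when `ψ a ∈ F H^{i-1}(B)`
and `b = ψ (e a) = ē (ψ a)`.
-/

open CategoryTheory CategoryTheory.Limits CochainComplex HomologicalComplex

universe u₁

section

variable {K : Type u₁} [Field K]
variable (A B Q : CochainComplex (ModuleCat.{u₁} K) ℤ)
variable (ψ : A ⟶ B) (e : A ⟶ A) (π : B ⟶ Q)

/-- The morphism `A → A ⊕ B/F` whose components are `e` and the composite of `ψ`
with the projection `π : B → B/F`. -/
noncomputable def synF : A ⟶ A ⊞ Q := biprod.lift e (ψ ≫ π)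

/-- The mapping fibre `T = Fib(A → A ⊕ B/F) = Cone(A → A ⊕ B/F)[-1]`. -/
noncomputable def synT : CochainComplex (ModuleCat.{u₁} K) ℤ :=
  (mappingCone (synF A B Q ψ e π))⟦(-1 : ℤ)⟧

/-- The projection of `T` onto `A`, induced by the third map of the mapping cone
triangle, shifted by `-1`. -/
noncomputable def synPr : synT A B Q ψ e π ⟶ A :=
  ((mappingCone.triangle (synF A B Q ψ e π)).mor₃)⟦(-1 : ℤ)⟧' ≫
    (shiftFunctorCompIsoId (CochainComplex (ModuleCat.{u₁} K) ℤ) (1 : ℤ) (-1 : ℤ)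
      (by norm_num)).hom.app A

/-- The endomorphism `ē` of `H^j(B)` obtained by transporting `H^j(e)` along the
isomorphism `H^j(ψ)`. -/
noncomputable def eBar (j : ℤ) (hψj : Function.Bijective (homologyMap ψ j)) :
    ↥(B.homology j) →ₗ[K] ↥(B.homology j) :=
  (LinearEquiv.ofBijective (homologyMap ψ j).hom hψj).toLinearMap ∘ₗ
    (homologyMap e j).hom ∘ₗ
      (LinearEquiv.ofBijective (homologyMap ψ j).hom hψj).symm.toLinearMap

end

lemma CategoryTheory.comp_eq_zero_of_iso {D : Type*} [Category D] [HasZeroMorphisms D]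
    {X₁ X₂ X₃ Y₁ Y₂ Y₃ : D} {f : X₁ ⟶ X₂} {g : X₂ ⟶ X₃}
    {f' : Y₁ ⟶ Y₂} {g' : Y₂ ⟶ Y₃} (e₁ : X₁ ≅ Y₁) (e₂ : X₂ ≅ Y₂) (e₃ : X₃ ≅ Y₃)
    (comm₁₂ : e₁.hom ≫ f' = f ≫ e₂.hom) (comm₂₃ : e₂.hom ≫ g' = g ≫ e₃.hom)
    (zero : f ≫ g = 0) : f' ≫ g' = 0 := by
  rw [← cancel_epi e₁.hom, ← Category.assoc, comm₁₂, Category.assoc, comm₂₃,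
    ← Category.assoc, zero, zero_comp, comp_zero]

namespace CochainComplex

open Pretriangulated ComplexShape

variable {C : Type*} [Category C] [Abelian C]

noncomputable def quotientHomologyIso (K : CochainComplex C ℤ) (n : ℤ) :
    (HomotopyCategory.homologyFunctor C (up ℤ) n).obj
      ((HomotopyCategory.quotient C (up ℤ)).obj K) ≅ K.homology n :=
  (HomotopyCategory.homologyFunctorFactors C (up ℤ) n).app K

lemma quotientHomologyIso_hom_naturality {K L : CochainComplex C ℤ} (f : K ⟶ L) (n : ℤ) :
    (HomotopyCategory.homologyFunctor C (up ℤ) n).map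
        ((HomotopyCategory.quotient C (up ℤ)).map f) ≫ (quotientHomologyIso L n).hom =
      (quotientHomologyIso K n).hom ≫ homologyMap f n :=
  (HomotopyCategory.homologyFunctorFactors C (up ℤ) n).hom.naturality f

lemma mappingCone_triangle_invRotate_distinguished {X Y : CochainComplex C ℤ} (φ : X ⟶ Y) :
    (HomotopyCategory.quotient C (up ℤ)).mapTriangle.obj (mappingCone.triangle φ).invRotate ∈
      distTriang _ :=
  isomorphic_distinguished _
    (inv_rot_of_distTriang _ (HomotopyCategory.mappingCone_triangleh_distinguished φ)) _
    (((HomotopyCategory.quotient C (up ℤ)).mapTriangleInvRotateIso).app _).symm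

variable (T : Triangle (CochainComplex C ℤ))
  (hT : (HomotopyCategory.quotient C (up ℤ)).mapTriangle.obj T ∈ distTriang _)

noncomputable def homologyδ (n₀ n₁ : ℤ) (h : n₀ + 1 = n₁) :
    T.obj₃.homology n₀ ⟶ T.obj₁.homology n₁ :=
  (quotientHomologyIso T.obj₃ n₀).inv ≫
    (HomotopyCategory.homologyFunctor C (up ℤ) 0).homologySequenceδ
      ((HomotopyCategory.quotient C (up ℤ)).mapTriangle.obj T) n₀ n₁ h ≫
    (quotientHomologyIso T.obj₁ n₁).hom

lemma quotientHomologyIso_hom_comp_homologyδ (n₀ n₁ : ℤ) (h : n₀ + 1 = n₁) :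
    (quotientHomologyIso T.obj₃ n₀).hom ≫ homologyδ T n₀ n₁ h =
      (HomotopyCategory.homologyFunctor C (up ℤ) 0).homologySequenceδ
        ((HomotopyCategory.quotient C (up ℤ)).mapTriangle.obj T) n₀ n₁ h ≫
      (quotientHomologyIso T.obj₁ n₁).hom :=
  Iso.hom_inv_id_assoc _ _

include hT

lemma homologyMap_mor₁_comp_mor₂ (n : ℤ) :
    homologyMap T.mor₁ n ≫ homologyMap T.mor₂ n = 0 :=
  comp_eq_zero_of_iso (quotientHomologyIso _ n) (quotientHomologyIso _ n)
    (quotientHomologyIso _ n) (quotientHomologyIso_hom_naturality T.mor₁ n).symm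
    (quotientHomologyIso_hom_naturality T.mor₂ n).symm
    ((HomotopyCategory.homologyFunctor C (up ℤ) 0).homologySequence_comp _ hT n)

lemma homologyMap_mor₂_comp_homologyδ (n₀ n₁ : ℤ) (h : n₀ + 1 = n₁) :
    homologyMap T.mor₂ n₀ ≫ homologyδ T n₀ n₁ h = 0 :=
  comp_eq_zero_of_iso (quotientHomologyIso _ n₀) (quotientHomologyIso _ n₀)
    (quotientHomologyIso _ n₁) (quotientHomologyIso_hom_naturality T.mor₂ n₀).symm
    (quotientHomologyIso_hom_comp_homologyδ T n₀ n₁ h)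
    ((HomotopyCategory.homologyFunctor C (up ℤ) 0).comp_homologySequenceδ _ hT n₀ n₁ h)

lemma homologyδ_comp_homologyMap_mor₁ (n₀ n₁ : ℤ) (h : n₀ + 1 = n₁) :
    homologyδ T n₀ n₁ h ≫ homologyMap T.mor₁ n₁ = 0 :=
  comp_eq_zero_of_iso (quotientHomologyIso _ n₀) (quotientHomologyIso _ n₁)
    (quotientHomologyIso _ n₁) (quotientHomologyIso_hom_comp_homologyδ T n₀ n₁ h)
    (quotientHomologyIso_hom_naturality T.mor₁ n₁).symm
    ((HomotopyCategory.homologyFunctor C (up ℤ) 0).homologySequenceδ_comp _ hT n₀ n₁ h)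

lemma homologyMap_exact₂ (n : ℤ) :
    (ShortComplex.mk _ _ (homologyMap_mor₁_comp_mor₂ T hT n)).Exact :=
  ShortComplex.exact_of_iso
    (ShortComplex.isoMk (quotientHomologyIso _ n) (quotientHomologyIso _ n)
      (quotientHomologyIso _ n) (quotientHomologyIso_hom_naturality T.mor₁ n).symm
      (quotientHomologyIso_hom_naturality T.mor₂ n).symm)
    ((HomotopyCategory.homologyFunctor C (up ℤ) 0).homologySequence_exact₂ _ hT n)

lemma homologyMap_exact₃ (n₀ n₁ : ℤ) (h : n₀ + 1 = n₁) :
    (ShortComplex.mk _ _ (homologyMap_mor₂_comp_homologyδ T hT n₀ n₁ h)).Exact :=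
  ShortComplex.exact_of_iso
    (ShortComplex.isoMk (quotientHomologyIso _ n₀) (quotientHomologyIso _ n₀)
      (quotientHomologyIso _ n₁) (quotientHomologyIso_hom_naturality T.mor₂ n₀).symm
      (quotientHomologyIso_hom_comp_homologyδ T n₀ n₁ h))
    ((HomotopyCategory.homologyFunctor C (up ℤ) 0).homologySequence_exact₃ _ hT n₀ n₁ h)

lemma homologyMap_exact₁ (n₀ n₁ : ℤ) (h : n₀ + 1 = n₁) :
    (ShortComplex.mk _ _ (homologyδ_comp_homologyMap_mor₁ T hT n₀ n₁ h)).Exact :=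
  ShortComplex.exact_of_iso
    (ShortComplex.isoMk (quotientHomologyIso _ n₀) (quotientHomologyIso _ n₁)
      (quotientHomologyIso _ n₁) (quotientHomologyIso_hom_comp_homologyδ T n₀ n₁ h)
      (quotientHomologyIso_hom_naturality T.mor₁ n₁).symm)
    ((HomotopyCategory.homologyFunctor C (up ℤ) 0).homologySequence_exact₁ _ hT n₀ n₁ h)

end CochainComplex

namespace HomologicalComplex

variable {R : Type*} [Ring R] {ι : Type*} {c : ComplexShape ι}
  {X Y Z : HomologicalComplex (ModuleCat R) c} {j : ι}

lemma homologyMap_comp_apply {W : HomologicalComplex (ModuleCat R) c} (f : X ⟶ Y) (g : Y ⟶ W)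
    (x : X.homology j) : homologyMap (f ≫ g) j x = homologyMap g j (homologyMap f j x) := by
  rw [homologyMap_comp]
  rfl

lemma homology_biprod_ext {x y : (Y ⊞ Z).homology j}
    (h₁ : homologyMap (biprod.fst : Y ⊞ Z ⟶ Y) j x = homologyMap (biprod.fst : Y ⊞ Z ⟶ Y) j y)
    (h₂ : homologyMap (biprod.snd : Y ⊞ Z ⟶ Z) j x = homologyMap (biprod.snd : Y ⊞ Z ⟶ Z) j y) :
    x = y := by
  have total (v : (Y ⊞ Z).homology j) :
      homologyMap (biprod.inl : Y ⟶ Y ⊞ Z) j (homologyMap (biprod.fst : Y ⊞ Z ⟶ Y) j v) +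
        homologyMap (biprod.inr : Z ⟶ Y ⊞ Z) j (homologyMap (biprod.snd : Y ⊞ Z ⟶ Z) j v) = v := by
    have h := congrArg (fun f : Y ⊞ Z ⟶ Y ⊞ Z => homologyMap f j v)
      (biprod.total (X := Y) (Y := Z))
    rw [homologyMap_add, homologyMap_comp, homologyMap_comp, homologyMap_id] at h
    exact h
  rw [← total x, ← total y, h₁, h₂]

variable (f : X ⟶ Y) (g : X ⟶ Z)

lemma homologyMap_biprodLift_eq_homologyMap_inl_iff (x : X.homology j) (y : Y.homology j) :
    homologyMap (biprod.lift f g) j x = homologyMap (biprod.inl : Y ⟶ Y ⊞ Z) j y ↔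
      homologyMap f j x = y ∧ homologyMap g j x = 0 := by
  constructor
  · intro h
    constructor
    · simpa only [← homologyMap_comp_apply, biprod.lift_fst, biprod.inl_fst, homologyMap_id,
        ConcreteCategory.id_apply]
        using congrArg (homologyMap (biprod.fst : Y ⊞ Z ⟶ Y) j) h
    · simpa only [← homologyMap_comp_apply, biprod.lift_snd, biprod.inl_snd, homologyMap_zero,
        ModuleCat.hom_zero, LinearMap.zero_apply]
        using congrArg (homologyMap (biprod.snd : Y ⊞ Z ⟶ Z) j) h
  · rintro ⟨hf, hg⟩
    apply homology_biprod_ext <;>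
      simp only [← homologyMap_comp_apply, biprod.lift_fst, biprod.inl_fst, biprod.lift_snd,
        biprod.inl_snd, homologyMap_id, homologyMap_zero, ConcreteCategory.id_apply,
        ModuleCat.hom_zero, LinearMap.zero_apply, hf, hg]

lemma ker_homologyMap_biprodLift :
    LinearMap.ker (homologyMap (biprod.lift f g) j).hom =
      LinearMap.ker (homologyMap f j).hom ⊓ LinearMap.ker (homologyMap g j).hom := by
  ext x
  simpa using homologyMap_biprodLift_eq_homologyMap_inl_iff f g x 0

lemma range_homologyMap_biprodLift_sup_range_inl (hg : Function.Surjective (homologyMap g j)) :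
    LinearMap.range (homologyMap (biprod.lift f g) j).hom ⊔
      LinearMap.range (homologyMap (biprod.inl : Y ⟶ Y ⊞ Z) j).hom = ⊤ := by
  refine eq_top_iff.2 fun v _ => ?_
  obtain ⟨x, hx⟩ := hg (homologyMap (biprod.snd : Y ⊞ Z ⟶ Z) j v)
  have hv : homologyMap (biprod.lift f g) j x +
      homologyMap (biprod.inl : Y ⟶ Y ⊞ Z) j
        (homologyMap (biprod.fst : Y ⊞ Z ⟶ Y) j v - homologyMap f j x) = v := by
    apply homology_biprod_ext <;>
      simp only [map_add, map_sub, ← homologyMap_comp_apply, Category.assoc, biprod.lift_fst,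
        biprod.inl_fst, biprod.lift_snd, biprod.inl_snd, Category.comp_id, comp_zero,
        homologyMap_zero, ModuleCat.hom_zero, LinearMap.zero_apply, hx, add_sub_cancel, sub_self,
        add_zero]
  rw [← hv]
  exact Submodule.add_mem_sup (LinearMap.mem_range_self _ x) (LinearMap.mem_range_self _ _)

end HomologicalComplex

lemma LinearMap.range_comp_eq_range_of_sup_eq_top {R : Type*} [Ring R]
    {M N V W : Type*} [AddCommGroup M] [AddCommGroup N] [AddCommGroup V] [AddCommGroup W]
    [Module R M] [Module R N] [Module R V] [Module R W]
    {f : N →ₗ[R] V} {g : M →ₗ[R] V} {δ : V →ₗ[R] W}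
    (hfg : LinearMap.range f ⊔ LinearMap.range g = ⊤) (hf : LinearMap.range f ≤ LinearMap.ker δ) :
    LinearMap.range (δ ∘ₗ g) = LinearMap.range δ := by
  rw [LinearMap.range_comp, LinearMap.range_eq_map δ, ← hfg, Submodule.map_sup,
    le_bot_iff.1 (Submodule.map_le_iff_le_comap.2 hf), bot_sup_eq]

section

variable {K : Type u₁} [Field K]
variable (A B Q : CochainComplex (ModuleCat.{u₁} K) ℤ)
variable (ψ : A ⟶ B) (e : A ⟶ A) (π : B ⟶ Q)

lemma eBar_homologyMap (j : ℤ) (hψj : Function.Bijective (homologyMap ψ j))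
    (a : A.homology j) :
    eBar A B ψ e j hψj (homologyMap ψ j a) = homologyMap ψ j (homologyMap e j a) := by
  simp [eBar]

lemma homologyMap_inl_mem_range_synF_iff (j : ℤ) (hψj : Function.Bijective (homologyMap ψ j))
    (a : A.homology j) :
    homologyMap (biprod.inl : A ⟶ A ⊞ Q) j a ∈
        LinearMap.range (homologyMap (synF A B Q ψ e π) j).hom ↔
      homologyMap ψ j a ∈
        (LinearMap.ker (homologyMap π j).hom).map (eBar A B ψ e j hψj) := by
  simp only [LinearMap.mem_range, Submodule.mem_map, LinearMap.mem_ker, synF]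
  constructor
  · rintro ⟨x, hx⟩
    obtain ⟨hex, hπψx⟩ := (homologyMap_biprodLift_eq_homologyMap_inl_iff _ _ x a).1 hx
    rw [homologyMap_comp_apply] at hπψx
    exact ⟨homologyMap ψ j x, hπψx, by rw [eBar_homologyMap, hex]⟩
  · rintro ⟨b, hb, hba⟩
    obtain ⟨x, rfl⟩ := hψj.2 b
    refine ⟨x, (homologyMap_biprodLift_eq_homologyMap_inl_iff _ _ x a).2 ⟨?_, ?_⟩⟩
    · exact hψj.1 (by rw [← eBar_homologyMap A B ψ e j hψj, hba])
    · rw [homologyMap_comp_apply]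
      exact hb

-- `(mappingCone.triangle φ).invRotate` is the fibre triangle `T → A → A ⊞ Q → T⟦1⟧`, whose
-- first map is `-synPr`.
noncomputable def synδ (i : ℤ) : (A ⊞ Q).homology (i - 1) ⟶ (synT A B Q ψ e π).homology i :=
  homologyδ (mappingCone.triangle (synF A B Q ψ e π)).invRotate (i - 1) i (by omega)

lemma ker_synδ (i : ℤ) :
    LinearMap.ker (synδ A B Q ψ e π i).hom =
      LinearMap.range (homologyMap (synF A B Q ψ e π) (i - 1)).hom :=
  (homologyMap_exact₃ _ (mappingCone_triangle_invRotate_distinguished _) (i - 1) i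
    (by omega)).moduleCat_range_eq_ker.symm

lemma range_synδ (i : ℤ) :
    LinearMap.range (synδ A B Q ψ e π i).hom =
      LinearMap.ker (homologyMap (synPr A B Q ψ e π) i).hom := by
  have h : LinearMap.range (synδ A B Q ψ e π i).hom =
      LinearMap.ker (homologyMap (-synPr A B Q ψ e π) i).hom :=
    (homologyMap_exact₁ _ (mappingCone_triangle_invRotate_distinguished _) (i - 1) i
      (by omega)).moduleCat_range_eq_ker
  rwa [homologyMap_neg, ModuleCat.hom_neg, LinearMap.ker_neg] at h

lemma range_homologyMap_synPr (i : ℤ) :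
    LinearMap.range (homologyMap (synPr A B Q ψ e π) i).hom =
      LinearMap.ker (homologyMap e i).hom ⊓
        Submodule.comap (homologyMap ψ i).hom (LinearMap.ker (homologyMap π i).hom) := by
  have h : LinearMap.range (homologyMap (-synPr A B Q ψ e π) i).hom =
      LinearMap.ker (homologyMap (synF A B Q ψ e π) i).hom :=
    (homologyMap_exact₂ _ (mappingCone_triangle_invRotate_distinguished _) i).moduleCat_range_eq_ker
  rw [homologyMap_neg, ModuleCat.hom_neg, LinearMap.range_neg] at h
  rw [h, synF, ker_homologyMap_biprodLift, homologyMap_comp, ModuleCat.hom_comp,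
    LinearMap.ker_comp]

noncomputable def synδB (i : ℤ) (hψ : Function.Bijective (homologyMap ψ (i - 1))) :
    B.homology (i - 1) →ₗ[K] (synT A B Q ψ e π).homology i :=
  (synδ A B Q ψ e π i).hom ∘ₗ (homologyMap (biprod.inl : A ⟶ A ⊞ Q) (i - 1)).hom ∘ₗ
    (LinearEquiv.ofBijective _ hψ).symm.toLinearMap

lemma ker_synδB (i : ℤ) (hψ : Function.Bijective (homologyMap ψ (i - 1))) :
    LinearMap.ker (synδB A B Q ψ e π i hψ) =
      (LinearMap.ker (homologyMap π (i - 1)).hom).map (eBar A B ψ e (i - 1) hψ) := by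
  ext b
  rw [synδB, LinearMap.ker_comp, Submodule.mem_comap, ker_synδ]
  have h := homologyMap_inl_mem_range_synF_iff A B Q ψ e π (i - 1) hψ
    ((LinearEquiv.ofBijective _ hψ).symm b)
  rwa [show homologyMap ψ (i - 1) ((LinearEquiv.ofBijective _ hψ).symm b) = b from
    (LinearEquiv.ofBijective _ hψ).apply_symm_apply b] at h

lemma range_synδB (i : ℤ) (hψ : Function.Bijective (homologyMap ψ (i - 1)))
    (hπ : Function.Surjective (homologyMap π (i - 1))) :
    LinearMap.range (synδB A B Q ψ e π i hψ) =
      LinearMap.ker (homologyMap (synPr A B Q ψ e π) i).hom := by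
  rw [synδB, ← range_synδ]
  refine LinearMap.range_comp_eq_range_of_sup_eq_top ?_ (ker_synδ A B Q ψ e π i).ge
  rw [LinearMap.range_comp_of_range_eq_top _ (LinearEquiv.ofBijective _ hψ).symm.range]
  refine range_homologyMap_biprodLift_sup_range_inl _ _ ?_
  rw [homologyMap_comp]
  exact hπ.comp hψ.2

theorem stmt_5
    (hψ : ∀ i, Function.Bijective (homologyMap ψ i))
    (hπH : ∀ i, Function.Surjective (homologyMap π i)) (i : ℤ) :
    ∃ ι : (↥(B.homology (i - 1)) ⧸
        Submodule.map (eBar A B ψ e (i - 1) (hψ (i - 1)))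
          (LinearMap.ker (homologyMap π (i - 1)).hom)) →ₗ[K]
        ↥((synT A B Q ψ e π).homology i),
      Function.Injective ι ∧
      LinearMap.range ι = LinearMap.ker (homologyMap (synPr A B Q ψ e π) i).hom ∧
      LinearMap.range (homologyMap (synPr A B Q ψ e π) i).hom =
        LinearMap.ker (homologyMap e i).hom ⊓
          Submodule.comap (homologyMap ψ i).hom (LinearMap.ker (homologyMap π i).hom) := by
  have ker_eq := ker_synδB A B Q ψ e π i (hψ (i - 1))
  refine ⟨Submodule.liftQ _ (synδB A B Q ψ e π i (hψ (i - 1))) ker_eq.ge, ?_, ?_,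
    range_homologyMap_synPr A B Q ψ e π i⟩
  · exact LinearMap.ker_eq_bot.1 (Submodule.ker_liftQ_eq_bot _ _ _ ker_eq.le)
  · rw [Submodule.range_liftQ, range_synδB A B Q ψ e π i (hψ (i - 1)) (hπH (i - 1))]

end
end
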